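/- Let G, H be abelian groups, let supp assign to each element of G a subset of a fixed set M, and suppose supp(a + b) ⊆ supp(a) ∪ supp(b) and supp(−a) = supp(a). Let Z : G → H satisfy the additivity property: Z(a + b + c) = Z(a + b) − Z(b) + Z(b + c) whenever supp(a) ∩ supp(c) = ∅. Define Z_V(F) := Z(V + F) − Z(V). Then for all V, V', F ∈ G with supp(V − V') ∩ supp(F) = ∅, one has Z_V(F) = Z_{V'}(F). -/

import Mathlib

theorem stmt18_general {G H M : Type*} [AddCommGroup G] [AddCommGroup H]
    (supp : G → Set M)
    (Z : G → H)
    (hZ : ∀ a b c : G, supp a ∩ supp c = ∅ →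
      Z (a + b + c) = Z (a + b) - Z b + Z (b + c)) :
    ∀ V V' F : G, supp (V - V') ∩ supp F = ∅ →
      Z (V + F) - Z V = Z (V' + F) - Z V' := by
  intro V V' F hdisj
  have hadd := hZ (V - V') V' F hdisj
  rw [sub_add_cancel] at hadd
  rw [hadd]
  abel

/-- Abstract locality of the Stückelberg–Petermann renormalization group: if
`Z : G → H` satisfies the additivity property
`Z(a + b + c) = Z(a + b) − Z(b) + Z(b + c)` whenever `supp a ∩ supp c = ∅`,
and the support map satisfies `supp(a+b) ⊆ supp a ∪ supp b` and `supp(−a) = supp a`,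
then the relative maps `Z_V(F) := Z(V + F) − Z(V)` satisfy `Z_V(F) = Z_{V'}(F)`
whenever `supp(V − V') ∩ supp F = ∅`. -/
theorem stmt18 {G H M : Type*} [AddCommGroup G] [AddCommGroup H]
    (supp : G → Set M)
    (hsupp_add : ∀ a b : G, supp (a + b) ⊆ supp a ∪ supp b)
    (hsupp_neg : ∀ a : G, supp (-a) = supp a)
    (Z : G → H)
    (hZ : ∀ a b c : G, supp a ∩ supp c = ∅ →
      Z (a + b + c) = Z (a + b) - Z b + Z (b + c)) :
    ∀ V V' F : G, supp (V - V') ∩ supp F = ∅ →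
      Z (V + F) - Z V = Z (V' + F) - Z V' :=
  stmt18_general supp Z hZ
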